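/- Let f ∈ Cu(G) be Besicovitch almost periodic with respect to a van Hove sequence A. Then for every character χ of G the Fourier–Bohr coefficient c_χ^A(f) exists. -/

import Mathlib

/-!
If a character `η` has `η t ≠ 1`, translating `A_n` by `t` multiplies `∫_{A_n} η` by `η t` but
changes `A_n` only inside its van Hove boundary `∂^{{t, -t}} A_n`, so
`|η t - 1| · |∫_{A_n} η| ≤ 2 |∂^{{t, -t}} A_n|` and the means of `η` along `A` tend to `0`.
Hence the means of `conj χ · P` along `A` converge for every trigonometric polynomial `P`.
Since `|χ| = 1`, the means of `conj χ · f` and `conj χ · P` over `A_n` differ by at most the mean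
of `|f - P|`, which is eventually below `ε` once `‖f - P‖_{b,1,A} < ε`; so the Fourier–Bohr
averages of `f` form a Cauchy sequence.
-/

open MeasureTheory Filter Topology Pointwise ComplexConjugate
open scoped BigOperators

noncomputable section

variable {G : Type*} [AddCommGroup G] [UniformSpace G] [IsUniformAddGroup G]
  [LocallyCompactSpace G] [SecondCountableTopology G]
  [MeasurableSpace G] [BorelSpace G]

/-- The van Hove `K`-boundary of a set `B`:
`∂^K B = (closure (B+K) \ B) ∪ (((G \ B) - K) ∩ closure B)`. -/
def vhBoundary (K B : Set G) : Set G :=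
  (closure (B + K) \ B) ∪ ((Bᶜ - K) ∩ closure B)

/-- `A` is a van Hove sequence for the Haar measure `μ`: a sequence of compact sets of
positive measure such that for every compact `K` the relative measure of the van Hove
boundary tends to `0`. -/
def IsVanHove (μ : Measure G) (A : ℕ → Set G) : Prop :=
  (∀ n, IsCompact (A n)) ∧ (∀ n, 0 < μ (A n)) ∧
    ∀ K : Set G, IsCompact K →
      Tendsto (fun n => μ (vhBoundary K (A n)) / μ (A n)) atTop (nhds 0)

/-- `f ∈ Cu(G)`: bounded and uniformly continuous. -/
def IsCu (f : G → ℂ) : Prop :=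
  UniformContinuous f ∧ ∃ C : ℝ, ∀ x, ‖f x‖ ≤ C

/-- `χ` is a (continuous, unimodular) character of `G`, viewed as a `ℂ`-valued function. -/
def IsChar (χ : G → ℂ) : Prop :=
  Continuous χ ∧ (∀ x, ‖χ x‖ = 1) ∧ ∀ x y, χ (x + y) = χ x * χ y

/-- `f̃(x) = conj (f (-x))`. -/
def tilde (f : G → ℂ) : G → ℂ := fun x => conj (f (-x))

/-- `(T_t f)(x) = f (x - t)`. -/
def shiftBy (t : G) (f : G → ℂ) : G → ℂ := fun x => f (x - t)

/-- Sup norm `‖f‖_∞`. -/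
def supN (f : G → ℂ) : ℝ := ⨆ x, ‖f x‖

/-- The Fourier–Bohr coefficient `c_χ^A(f)` exists and equals `c`. -/
def FBTendsto (μ : Measure G) (A : ℕ → Set G) (χ f : G → ℂ) (c : ℂ) : Prop :=
  Tendsto (fun n => (μ (A n)).toReal⁻¹ • ∫ t in A n, conj (χ t) * f t ∂μ)
    atTop (nhds c)

/-- The Fourier–Bohr coefficient of `f` at `χ` exists uniformly (w.r.t. `A`) with value `c`:
`lim_n |A_n|⁻¹ ∫_{x+A_n} conj (χ t) f t dθ(t) = c` uniformly in `x ∈ G`. -/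
def FBUniform (μ : Measure G) (A : ℕ → Set G) (χ f : G → ℂ) (c : ℂ) : Prop :=
  TendstoUniformly
    (fun n (x : G) => (μ (A n)).toReal⁻¹ • ∫ t in x +ᵥ A n, conj (χ t) * f t ∂μ)
    (fun _ => c) atTop

/-- The Eberlein convolution `f ⊛_A g` exists and equals `F`:
for every `t`, `lim_n |A_n|⁻¹ ∫_{A_n} f s · g (t - s) dθ(s) = F t`. -/
def EberleinTendsto (μ : Measure G) (A : ℕ → Set G) (f g F : G → ℂ) : Prop :=
  ∀ t : G, Tendsto (fun n => (μ (A n)).toReal⁻¹ • ∫ s in A n, f s * g (t - s) ∂μ)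
    atTop (nhds (F t))

/-- The Besicovitch seminorm `‖f‖_{b,p,A}`. -/
def bNorm (μ : Measure G) (A : ℕ → Set G) (p : ℝ) (f : G → ℂ) : ℝ :=
  Filter.limsup
    (fun n => ((μ (A n)).toReal⁻¹ * ∫ t in A n, ‖f t‖ ^ p ∂μ) ^ (1 / p)) atTop

/-- `P` is a trigonometric polynomial: a finite linear combination of characters. -/
def IsTrigPoly (P : G → ℂ) : Prop :=
  ∃ (k : ℕ) (c : Fin k → ℂ) (χ : Fin k → G → ℂ),
    (∀ j, IsChar (χ j)) ∧ P = fun x => ∑ j, c j * χ j x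

/-- `f ∈ Bap^p_A(G)`: `f` can be approximated by trigonometric polynomials in `‖·‖_{b,p,A}`. -/
def BapP (μ : Measure G) (A : ℕ → Set G) (p : ℝ) (f : G → ℂ) : Prop :=
  ∀ ε : ℝ, 0 < ε → ∃ P : G → ℂ, IsTrigPoly P ∧ bNorm μ A p (fun x => f x - P x) < ε

/-- `f` is amenable w.r.t. `A` with mean `c`:
`lim_n |A_n|⁻¹ ∫_{x+A_n} f dθ = c` uniformly in `x ∈ G`. -/
def Amenable (μ : Measure G) (A : ℕ → Set G) (f : G → ℂ) (c : ℂ) : Prop :=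
  TendstoUniformly
    (fun n (x : G) => (μ (A n)).toReal⁻¹ • ∫ t in x +ᵥ A n, f t ∂μ)
    (fun _ => c) atTop

open Set
open scoped ENNReal

section Averages

variable {X E : Type*} [MeasurableSpace X] [NormedAddCommGroup E] {μ : Measure X}

theorem setAverage_norm_le_of_norm_le {f : X → E} {s : Set X} {C : ℝ} (hs : μ s < ∞)
    (hC₀ : 0 ≤ C) (hC : ∀ x ∈ s, ‖f x‖ ≤ C) : ⨍ x in s, ‖f x‖ ∂μ ≤ C := by
  rw [setAverage_eq, smul_eq_mul]
  refine inv_mul_le_of_le_mul₀ measureReal_nonneg hC₀ ?_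
  calc ∫ x in s, ‖f x‖ ∂μ ≤ ‖∫ x in s, ‖f x‖ ∂μ‖ := Real.le_norm_self _
    _ ≤ C * μ.real s := norm_setIntegral_le_of_norm_le_const hs (by simpa using hC)
    _ = μ.real s * C := mul_comm _ _

variable [NormedSpace ℝ E]

theorem average_sub {f g : X → E} (hf : Integrable f μ) (hg : Integrable g μ) :
    ⨍ x, (f x - g x) ∂μ = ⨍ x, f x ∂μ - ⨍ x, g x ∂μ := by
  simp only [average_eq, integral_sub hf hg, smul_sub]

theorem average_finsetSum {ι : Type*} (s : Finset ι) {f : ι → X → E}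
    (hf : ∀ i ∈ s, Integrable (f i) μ) :
    ⨍ x, ∑ i ∈ s, f i x ∂μ = ∑ i ∈ s, ⨍ x, f i x ∂μ := by
  simp only [average_eq, integral_finsetSum s hf, Finset.smul_sum]

theorem average_const_mul {𝕜 : Type*} [RCLike 𝕜] (c : 𝕜) (f : X → 𝕜) :
    ⨍ x, c * f x ∂μ = c * ⨍ x, f x ∂μ := by
  simp only [average_eq, integral_const_mul, mul_smul_comm]

theorem norm_average_le_average_norm (f : X → E) : ‖⨍ x, f x ∂μ‖ ≤ ⨍ x, ‖f x‖ ∂μ := by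
  simp only [average_eq, norm_smul, norm_inv, Real.norm_of_nonneg measureReal_nonneg,
    smul_eq_mul]
  exact mul_le_mul_of_nonneg_left (norm_integral_le_integral_norm f) (by positivity)

theorem norm_setIntegral_sub_setIntegral_le {f : X → E} {s t D : Set X}
    (hs : MeasurableSet s) (ht : MeasurableSet t) (hfs : IntegrableOn f s μ)
    (hft : IntegrableOn f t μ) (hf : ∀ x, ‖f x‖ ≤ 1) (hsD : s \ t ⊆ D) (htD : t \ s ⊆ D)
    (hD : μ D < ∞) :
    ‖∫ x in s, f x ∂μ - ∫ x in t, f x ∂μ‖ ≤ 2 * μ.real D := by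
  have hpiece : ∀ u ⊆ D, ‖∫ x in u, f x ∂μ‖ ≤ μ.real D := fun u hu =>
    (norm_setIntegral_le_of_norm_le_const ((measure_mono hu).trans_lt hD) fun x _ => hf x).trans
      (by rw [one_mul]; exact measureReal_mono hu hD.ne)
  rw [← integral_inter_add_sdiff ht hfs, ← integral_inter_add_sdiff hs hft, inter_comm t s,
    add_sub_add_left_eq_sub]
  calc _ ≤ _ := norm_sub_le _ _
    _ ≤ μ.real D + μ.real D := add_le_add (hpiece _ hsD) (hpiece _ htD)
    _ = 2 * μ.real D := (two_mul _).symm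

end Averages

theorem cauchySeq_of_forall_eventually_dist_lt {α : Type*} [PseudoMetricSpace α] {u : ℕ → α}
    (h : ∀ ε > 0, ∃ v : ℕ → α, CauchySeq v ∧ ∀ᶠ n in atTop, dist (u n) (v n) < ε) :
    CauchySeq u := by
  refine Metric.cauchySeq_iff.2 fun ε hε => ?_
  obtain ⟨v, hv, huv⟩ := h (ε / 3) (by positivity)
  obtain ⟨N₁, hN₁⟩ := eventually_atTop.1 huv
  obtain ⟨N₂, hN₂⟩ := Metric.cauchySeq_iff.1 hv (ε / 3) (by positivity)
  refine ⟨max N₁ N₂, fun m hm n hn => ?_⟩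
  rw [ge_iff_le, max_le_iff] at hm hn
  calc dist (u m) (u n) ≤ dist (u m) (v m) + dist (v m) (v n) + dist (v n) (u n) :=
        dist_triangle4 _ _ _ _
    _ < ε / 3 + ε / 3 + ε / 3 := by
        gcongr
        · exact hN₁ m hm.1
        · exact hN₂ m hm.2 n hn.2
        · rw [dist_comm]; exact hN₁ n hn.1
    _ = ε := by ring

/- Compact sets need not be measurable when the space is not Hausdorff, but they differ from
their (measurable) closures by no mass. -/
theorem IsCompact.restrict_closure {X : Type*} [TopologicalSpace X] [R1Space X]
    [MeasurableSpace X] [BorelSpace X] {μ : Measure X} {s : Set X} (hs : IsCompact s)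
    (hμs : μ s ≠ ∞) : μ.restrict (closure s) = μ.restrict s :=
  le_antisymm
    (calc μ.restrict (closure s) ≤ μ.restrict (toMeasurable μ s) :=
          Measure.restrict_mono (hs.closure_subset_measurableSet
            (measurableSet_toMeasurable μ s) (subset_toMeasurable μ s)) le_rfl
      _ = μ.restrict s := Measure.restrict_toMeasurable hμs)
    (Measure.restrict_mono subset_closure le_rfl)

section Characters

variable {H : Type*} [AddCommGroup H] [UniformSpace H] {χ ψ : H → ℂ}

theorem IsChar.continuous (hχ : IsChar χ) : Continuous χ := hχ.1

theorem IsChar.norm_apply (hχ : IsChar χ) (x : H) : ‖χ x‖ = 1 := hχ.2.1 x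

theorem IsChar.map_add (hχ : IsChar χ) (x y : H) : χ (x + y) = χ x * χ y := hχ.2.2 x y

theorem IsChar.conj (hχ : IsChar χ) : IsChar fun x => conj (χ x) :=
  ⟨Complex.continuous_conj.comp hχ.continuous, fun x => by simp [hχ.norm_apply],
    fun x y => by simp [hχ.map_add]⟩

theorem IsChar.mul (hχ : IsChar χ) (hψ : IsChar ψ) : IsChar fun x => χ x * ψ x :=
  ⟨hχ.continuous.mul hψ.continuous, fun x => by simp [hχ.norm_apply, hψ.norm_apply],
    fun x y => by simp only [hχ.map_add, hψ.map_add]; ring⟩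

theorem closure_diff_vadd_closure_subset_vhBoundary {K s : Set H} {t : H} (ht : -t ∈ K) :
    closure s \ (t +ᵥ closure s) ⊆ vhBoundary K s := by
  rintro x ⟨hxs, hxt⟩
  refine Or.inr ⟨⟨x - t, fun h => hxt ⟨x - t, subset_closure h, ?_⟩, -t, ht, ?_⟩, hxs⟩
  · simp [vadd_eq_add]
  · simp

theorem IsChar.integrableOn [MeasurableSpace H] [OpensMeasurableSpace H] (hχ : IsChar χ)
    {μ : Measure H} {s : Set H} (hs : μ s ≠ ∞) :
    IntegrableOn χ s μ :=
  Measure.integrableOn_of_bounded hs hχ.continuous.aestronglyMeasurable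
    (ae_of_all _ fun x => (hχ.norm_apply x).le)

variable [IsUniformAddGroup H]

theorem vadd_closure_diff_closure_subset_vhBoundary {K s : Set H} {t : H} (ht : t ∈ K) :
    (t +ᵥ closure s) \ closure s ⊆ vhBoundary K s := by
  rintro x ⟨hxt, hxs⟩
  refine Or.inl ⟨?_, fun h => hxs (subset_closure h)⟩
  rw [← closure_vadd] at hxt
  refine closure_mono ?_ hxt
  rintro _ ⟨y, hy, rfl⟩
  exact ⟨y, hy, t, ht, add_comm y t⟩

theorem IsCompact.measure_vhBoundary_lt_top [MeasurableSpace H] {μ : Measure H}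
    [IsFiniteMeasureOnCompacts μ] {K s : Set H} (hs : IsCompact s) (hK : IsCompact K) :
    μ (vhBoundary K s) < ∞ :=
  (measure_mono (union_subset_union sdiff_subset inter_subset_right)).trans_lt
    (measure_union_lt_top (hs.add hK).closure.measure_lt_top hs.closure.measure_lt_top)

variable [MeasurableSpace H] [BorelSpace H] (μ : Measure H) [μ.IsAddLeftInvariant]

theorem IsChar.setIntegral_vadd (hχ : IsChar χ) (t : H) (B : Set H) :
    ∫ x in t +ᵥ B, χ x ∂μ = χ t * ∫ x in B, χ x ∂μ := by
  change ∫ x in (t + ·) '' B, χ x ∂μ = _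
  rw [(measurePreserving_add_left μ t).setIntegral_image_emb (measurableEmbedding_addLeft t)]
  simp only [hχ.map_add, integral_const_mul]

theorem IsChar.norm_sub_one_mul_norm_setIntegral_le [IsFiniteMeasureOnCompacts μ]
    (hχ : IsChar χ) {s : Set H} (hs : IsCompact s) (t : H) :
    ‖χ t - 1‖ * ‖∫ x in s, χ x ∂μ‖ ≤ 2 * μ.real (vhBoundary {t, -t} s) := by
  have hB : IsCompact (closure s) := hs.closure
  have hBt : IsCompact (t +ᵥ closure s) := by
    simpa only [image_vadd] using hB.image (continuous_const_vadd t)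
  rw [← hs.restrict_closure hs.measure_lt_top.ne, ← norm_mul, sub_mul, one_mul,
    ← hχ.setIntegral_vadd μ t]
  exact norm_setIntegral_sub_setIntegral_le (isClosed_closure.measurableSet.const_vadd t)
    isClosed_closure.measurableSet (hχ.integrableOn hBt.measure_lt_top.ne)
    (hχ.integrableOn hB.measure_lt_top.ne) (fun x => (hχ.norm_apply x).le)
    (vadd_closure_diff_closure_subset_vhBoundary (mem_insert t _))
    (closure_diff_vadd_closure_subset_vhBoundary (mem_insert_of_mem _ rfl))
    (hs.measure_vhBoundary_lt_top (toFinite _).isCompact)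

end Characters

section TrigPoly

variable {H : Type*} [AddCommGroup H] [UniformSpace H] {P : H → ℂ}

theorem IsTrigPoly.continuous (hP : IsTrigPoly P) : Continuous P := by
  obtain ⟨k, c, ψ, hψ, rfl⟩ := hP
  exact continuous_finsetSum _ fun j _ => continuous_const.mul (hψ j).continuous

theorem IsTrigPoly.exists_norm_le (hP : IsTrigPoly P) : ∃ C, ∀ x, ‖P x‖ ≤ C := by
  obtain ⟨k, c, ψ, hψ, rfl⟩ := hP
  refine ⟨∑ j, ‖c j‖, fun x => (norm_sum_le _ _).trans_eq ?_⟩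
  simp only [norm_mul, (hψ _).norm_apply, mul_one]

theorem IsTrigPoly.conj_mul {χ : H → ℂ} (hχ : IsChar χ) (hP : IsTrigPoly P) :
    IsTrigPoly fun x => conj (χ x) * P x := by
  obtain ⟨k, c, ψ, hψ, rfl⟩ := hP
  refine ⟨k, c, fun j x => conj (χ x) * ψ j x, fun j => hχ.conj.mul (hψ j), funext fun x => ?_⟩
  simp only [Finset.mul_sum, mul_left_comm]

end TrigPoly

section VanHove

variable {H : Type*} [AddCommGroup H] [UniformSpace H] [MeasurableSpace H] {μ : Measure H}
  {A : ℕ → Set H}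

theorem IsVanHove.tendsto_measureReal_vhBoundary_div (hA : IsVanHove μ A) {K : Set H}
    (hK : IsCompact K) :
    Tendsto (fun n => μ.real (vhBoundary K (A n)) / μ.real (A n)) atTop (𝓝 0) := by
  simpa [Function.comp_def, measureReal_def, ENNReal.toReal_div] using
    (ENNReal.tendsto_toReal ENNReal.zero_ne_top).comp (hA.2.2 K hK)

variable [IsUniformAddGroup H] [BorelSpace H] [μ.IsAddLeftInvariant] [IsFiniteMeasureOnCompacts μ]
  {χ P : H → ℂ}

theorem IsVanHove.tendsto_setAverage_of_isChar_of_ne_one (hA : IsVanHove μ A)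
    (hχ : IsChar χ) {t : H} (ht : χ t ≠ 1) :
    Tendsto (fun n => ⨍ x in A n, χ x ∂μ) atTop (𝓝 0) := by
  have hd : 0 < ‖χ t - 1‖ := norm_pos_iff.2 (sub_ne_zero.2 ht)
  refine squeeze_zero_norm (fun n => ?_) (by
    simpa using (hA.tendsto_measureReal_vhBoundary_div (toFinite {t, -t}).isCompact).const_mul
      (2 / ‖χ t - 1‖))
  have hest := hχ.norm_sub_one_mul_norm_setIntegral_le μ (hA.1 n) t
  rw [setAverage_eq, norm_smul, norm_inv, Real.norm_of_nonneg measureReal_nonneg]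
  calc (μ.real (A n))⁻¹ * ‖∫ x in A n, χ x ∂μ‖
      ≤ (μ.real (A n))⁻¹ * (2 * μ.real (vhBoundary {t, -t} (A n)) / ‖χ t - 1‖) := by
        gcongr
        rw [le_div_iff₀ hd, mul_comm]
        exact hest
    _ = 2 / ‖χ t - 1‖ * (μ.real (vhBoundary {t, -t} (A n)) / μ.real (A n)) := by ring

theorem IsVanHove.exists_tendsto_setAverage_of_isChar (hA : IsVanHove μ A) (hχ : IsChar χ) :
    ∃ c, Tendsto (fun n => ⨍ x in A n, χ x ∂μ) atTop (𝓝 c) := by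
  by_cases hnontriv : ∃ t, χ t ≠ 1
  · obtain ⟨t, ht⟩ := hnontriv
    exact ⟨0, hA.tendsto_setAverage_of_isChar_of_ne_one hχ ht⟩
  · refine ⟨1, tendsto_const_nhds.congr fun n => ?_⟩
    simp only [not_exists_not.1 hnontriv]
    exact (setAverage_const (hA.2.1 n).ne' (hA.1 n).measure_lt_top.ne 1).symm

theorem IsVanHove.exists_tendsto_setAverage_of_isTrigPoly (hA : IsVanHove μ A)
    (hP : IsTrigPoly P) : ∃ c, Tendsto (fun n => ⨍ x in A n, P x ∂μ) atTop (𝓝 c) := by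
  obtain ⟨k, c, ψ, hψ, rfl⟩ := hP
  choose m hm using fun j => hA.exists_tendsto_setAverage_of_isChar (hψ j)
  refine ⟨∑ j, c j * m j,
    (tendsto_finsetSum _ fun j _ => (hm j).const_mul (c j)).congr fun n => ?_⟩
  rw [average_finsetSum _ fun j _ =>
    ((hψ j).integrableOn (hA.1 n).measure_lt_top.ne).const_mul (c j)]
  simp only [average_const_mul]

end VanHove

section Besicovitch

variable {H : Type*} [MeasurableSpace H] {μ : Measure H} {A : ℕ → Set H}

theorem bNorm_one_eq_limsup (g : H → ℂ) :
    bNorm μ A 1 g = limsup (fun n => ⨍ x in A n, ‖g x‖ ∂μ) atTop := by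
  simp only [bNorm, div_one, Real.rpow_one, setAverage_eq, smul_eq_mul, measureReal_def]

theorem eventually_setAverage_norm_lt_of_bNorm_lt (hA : ∀ n, μ (A n) < ∞) {g : H → ℂ}
    {C ε : ℝ} (hg : ∀ x, ‖g x‖ ≤ C) (h : bNorm μ A 1 g < ε) :
    ∀ᶠ n in atTop, ⨍ x in A n, ‖g x‖ ∂μ < ε := by
  rw [bNorm_one_eq_limsup] at h
  exact eventually_lt_of_limsup_lt h <| isBoundedUnder_of ⟨max C 0, fun n =>
    setAverage_norm_le_of_norm_le (hA n) (le_max_right _ _) fun x _ =>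
      (hg x).trans (le_max_left _ _)⟩

theorem fbTendsto_iff {χ f : H → ℂ} {c : ℂ} :
    FBTendsto μ A χ f c ↔
      Tendsto (fun n => ⨍ x in A n, conj (χ x) * f x ∂μ) atTop (𝓝 c) := by
  simp only [FBTendsto, setAverage_eq, measureReal_def]

theorem IsChar.norm_setAverage_conj_mul_sub_le [AddCommGroup H] [UniformSpace H]
    [OpensMeasurableSpace H] {χ f g : H → ℂ} (hχ : IsChar χ) {s : Set H}
    (hf : IntegrableOn f s μ) (hg : IntegrableOn g s μ) :
    ‖⨍ x in s, conj (χ x) * f x ∂μ - ⨍ x in s, conj (χ x) * g x ∂μ‖ ≤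
      ⨍ x in s, ‖f x - g x‖ ∂μ := by
  have hbdd : ∀ {u : H → ℂ}, IntegrableOn u s μ → IntegrableOn (fun x => conj (χ x) * u x) s μ :=
    fun hu => hu.bdd_mul hχ.conj.continuous.aestronglyMeasurable
      (ae_of_all _ fun x => (hχ.conj.norm_apply x).le)
  rw [← average_sub (hbdd hf) (hbdd hg)]
  refine (norm_average_le_average_norm _).trans_eq ?_
  simp only [← mul_sub, norm_mul, RCLike.norm_conj, hχ.norm_apply, one_mul]

end Besicovitch

/-- a Besicovitch almost periodic `f ∈ Cu(G)` has all Fourier–Bohr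
coefficients (w.r.t. `A`). -/
theorem stmt16 (μ : Measure G) [μ.IsAddHaarMeasure] (A : ℕ → Set G)
    (hA : IsVanHove μ A) (f : G → ℂ) (hf : IsCu f)
    (hBap : BapP μ A 1 f) :
    ∀ χ : G → ℂ, IsChar χ → ∃ c : ℂ, FBTendsto μ A χ f c := by
  intro χ hχ
  obtain ⟨hf_cont, C, hC⟩ := hf
  have hint : ∀ {g : G → ℂ}, Continuous g → ∀ n, IntegrableOn g (A n) μ := fun hg n =>
    hg.locallyIntegrable.integrableOn_isCompact (hA.1 n)
  simp only [fbTendsto_iff]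
  refine cauchySeq_tendsto_of_complete (cauchySeq_of_forall_eventually_dist_lt fun ε hε => ?_)
  obtain ⟨P, hP, hfP⟩ := hBap ε hε
  obtain ⟨CP, hCP⟩ := hP.exists_norm_le
  refine ⟨fun n => ⨍ x in A n, conj (χ x) * P x ∂μ,
    (hA.exists_tendsto_setAverage_of_isTrigPoly (hP.conj_mul hχ)).choose_spec.cauchySeq, ?_⟩
  filter_upwards [eventually_setAverage_norm_lt_of_bNorm_lt (fun n => (hA.1 n).measure_lt_top)
    (fun x => norm_sub_le_of_le (hC x) (hCP x)) hfP] with n hn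
  rw [dist_eq_norm]
  exact (hχ.norm_setAverage_conj_mul_sub_le (hint hf_cont.continuous n)
    (hint hP.continuous n)).trans_lt hn
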